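/- Fix λ > 0, ξ > 0, δ ∈ (0,1), and M ∈ (0,∞). For s > 0 and μ ∈ 𝒢(δ, M) define κ₃(s; μ) = ξ (1 − ρ) · ( s φ′(0) / φ(s)² − s² φ′(s) φ′(0) / φ(s)³ + s φ′(0) λ m₂ / (2 φ(s) (1 − ρ)²) ). Then there exists a constant 0 < K₃ < ∞ such that |κ₃(s; μ)| ≤ K₃ for every μ ∈ 𝒢(δ, M) and every s > 0. -/

import Mathlib

/-! Write `r = 1 − ρ`. Since `φ′(0) = −i r` and, for nonnegative job sizes and `s ≥ 0`,
`sin (s x) ≤ s x` gives `−Im φ(s) ≥ r s`, the factor `s φ′(0) / φ(s)` has modulus at most `1`.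
Factoring it out,
`κ₃ = ξ r · (s φ′(0) / φ(s)) · ((φ(s) − s φ′(s)) / φ(s)² + λ m₂ / (2 r²))`,
and the Taylor bound `|e^{it} − 1 − i t e^{it}| ≤ t² / 2` gives `|φ(s) − s φ′(s)| ≤ λ s² m₂ / 2`,
so both summands are at most `λ m₂ / (2 r²)`. Hence `|κ₃| ≤ ξ λ m₂ / r ≤ ξ λ (1 + M) / δ`, since
`x² ≤ 1 + x³` for `x ≥ 0`. -/

open MeasureTheory

/-- The characteristic function of a measure `μ` on `ℝ`. -/
noncomputable def charFn (μ : Measure ℝ) (s : ℝ) : ℂ :=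
  ∫ x, Complex.exp (Complex.I * s * x) ∂μ

/-- The characteristic exponent `φ(s) = λ(γ(s) − 1) − i s` of the net input process. -/
noncomputable def phi (lam : ℝ) (μ : Measure ℝ) (s : ℝ) : ℂ :=
  lam * (charFn μ s - 1) - Complex.I * s

/-- The derivative of the characteristic exponent: `φ′(s) = λ ∫ i x exp(i s x) dμ(x) − i`. -/
noncomputable def phiDeriv (lam : ℝ) (μ : Measure ℝ) (s : ℝ) : ℂ :=
  lam * ∫ x, Complex.I * x * Complex.exp (Complex.I * s * x) ∂μ - Complex.I

/-- The `k`-th moment of a measure on `ℝ`. -/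
noncomputable def moment (μ : Measure ℝ) (k : ℕ) : ℝ :=
  ∫ x, x ^ k ∂μ

/-- The quantity `κ₃(s; μ)` of Lemma 3.8:
`κ₃ = ξ(1−ρ)( sφ′(0)/φ(s)² − s²φ′(s)φ′(0)/φ(s)³ + sφ′(0)λm₂/(2φ(s)(1−ρ)²) )`. -/
noncomputable def kappa3 (lam ξ : ℝ) (μ : Measure ℝ) (s : ℝ) : ℂ :=
  (ξ : ℂ) * ((1 : ℂ) - lam * moment μ 1) *
    ((s : ℂ) * phiDeriv lam μ 0 / (phi lam μ s) ^ 2 -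
      (s : ℂ) ^ 2 * phiDeriv lam μ s * phiDeriv lam μ 0 / (phi lam μ s) ^ 3 +
      (s : ℂ) * phiDeriv lam μ 0 * lam * moment μ 2 /
        (2 * phi lam μ s * ((1 : ℂ) - lam * moment μ 1) ^ 2))

open Complex

theorem norm_cexp_I_mul_sub_one_sub_mul_le (t : ℝ) :
    ‖exp (I * t) - 1 - I * t * exp (I * t)‖ ≤ t ^ 2 / 2 := by
  wlog ht : 0 ≤ t generalizing t
  · have h := this (-t) (by linarith)
    rw [← norm_conj]
    convert h using 2 <;> simp [← exp_conj]
  have hderiv (u : ℝ) : HasDerivAt (fun v : ℝ => exp (I * v) - 1 - I * v * exp (I * v))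
      (u * exp (I * u)) u := by
    have he : HasDerivAt (fun z : ℂ => exp (I * z)) (I * exp (I * u)) u := by
      simpa [mul_comm] using ((hasDerivAt_id (u : ℂ)).const_mul I).cexp
    have := ((he.sub_const 1).sub (((hasDerivAt_id (u : ℂ)).const_mul I).mul he)).comp_ofReal
    convert this using 1
    · simp
    · simp only [id, mul_one]
      linear_combination (u : ℂ) * exp (I * u) * I_mul_I
  have hint : ∫ u in (0 : ℝ)..t, (u : ℂ) * exp (I * u) = exp (I * t) - 1 - I * t * exp (I * t) := by
    rw [intervalIntegral.integral_eq_sub_of_hasDerivAt (fun u _ => hderiv u)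
      (Continuous.intervalIntegrable (by fun_prop) _ _)]
    simp
  calc ‖exp (I * t) - 1 - I * t * exp (I * t)‖
      = ‖∫ u in (0 : ℝ)..t, (u : ℂ) * exp (I * u)‖ := by rw [hint]
    _ ≤ ∫ u in (0 : ℝ)..t, ‖(u : ℂ) * exp (I * u)‖ :=
        intervalIntegral.norm_integral_le_integral_norm ht
    _ = ∫ u in (0 : ℝ)..t, u := by
        refine intervalIntegral.integral_congr fun u hu => ?_
        rw [Set.uIcc_of_le ht] at hu
        simp [norm_exp_I_mul_ofReal, abs_of_nonneg hu.1]
    _ = t ^ 2 / 2 := by simp [integral_id]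

lemma kappa3_eq (lam ξ : ℝ) (μ : Measure ℝ) {s : ℝ} (hφ : phi lam μ s ≠ 0) :
    kappa3 lam ξ μ s = ξ * (1 - lam * moment μ 1) * (s * phiDeriv lam μ 0 / phi lam μ s) *
      ((phi lam μ s - s * phiDeriv lam μ s) / phi lam μ s ^ 2 +
        lam * moment μ 2 / (2 * (1 - lam * moment μ 1) ^ 2)) := by
  rw [kappa3]
  field_simp

lemma phiDeriv_zero (lam : ℝ) (μ : Measure ℝ) :
    phiDeriv lam μ 0 = -I * (1 - lam * moment μ 1) := by
  simp only [phiDeriv, moment, pow_one, ofReal_zero, mul_zero, zero_mul, exp_zero, mul_one,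
    integral_const_mul]
  rw [integral_complex_ofReal]
  ring

lemma norm_phiDeriv_zero (lam : ℝ) (μ : Measure ℝ) :
    ‖phiDeriv lam μ 0‖ = |1 - lam * moment μ 1| := by
  rw [phiDeriv_zero, norm_mul, norm_neg, norm_I, one_mul, ← ofReal_one, ← ofReal_mul,
    ← ofReal_sub, norm_real, Real.norm_eq_abs]

section

variable {μ : Measure ℝ}

lemma ae_nonneg_of_measure_Ici_eq_one [IsProbabilityMeasure μ] (h : μ (Set.Ici 0) = 1) :
    ∀ᵐ x ∂μ, 0 ≤ x :=
  (ae_iff_measure_eq measurableSet_Ici.nullMeasurableSet).2 (by rw [measure_univ]; exact h)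

lemma moment_two_le_one_add_moment_three [IsProbabilityMeasure μ] (hμ : ∀ᵐ x ∂μ, 0 ≤ x)
    (h2 : Integrable (fun x => x ^ 2) μ) (h3 : Integrable (fun x => x ^ 3) μ) :
    moment μ 2 ≤ 1 + moment μ 3 := by
  have hle : ∫ x, x ^ 2 ∂μ ≤ ∫ x, (1 + x ^ 3) ∂μ := by
    refine integral_mono_ae h2 ((integrable_const 1).add h3) ?_
    filter_upwards [hμ] with x hx
    rcases le_total x 1 with h | h <;> nlinarith
  simpa [moment, integral_add (integrable_const 1) h3] using hle

lemma integrable_cexp_I_mul [IsFiniteMeasure μ] (s : ℝ) :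
    Integrable (fun x : ℝ => exp (I * s * x)) μ :=
  Integrable.of_bound (by fun_prop) 1 (.of_forall fun x => by
    rw [mul_assoc, ← ofReal_mul, norm_exp_I_mul_ofReal])

lemma integrable_mul_cexp_I_mul (h1 : Integrable (fun x => x) μ) (s : ℝ) :
    Integrable (fun x : ℝ => I * x * exp (I * s * x)) μ := by
  refine h1.norm.mono' (by fun_prop) (.of_forall fun x => ?_)
  rw [mul_assoc I s, ← ofReal_mul, norm_mul, norm_mul, norm_exp_I_mul_ofReal, norm_I, norm_real]
  simp

lemma charFn_im [IsFiniteMeasure μ] (s : ℝ) : (charFn μ s).im = ∫ x, Real.sin (s * x) ∂μ := by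
  rw [charFn, ← RCLike.im_eq_complex_im, ← integral_im (integrable_cexp_I_mul s)]
  congr 1 with x
  rw [mul_assoc, ← ofReal_mul, mul_comm I, RCLike.im_eq_complex_im, exp_ofReal_mul_I_im]

lemma mul_le_norm_phi [IsFiniteMeasure μ] {lam s : ℝ} (hlam : 0 ≤ lam) (hs : 0 ≤ s)
    (hμ : ∀ᵐ x ∂μ, 0 ≤ x) (h1 : Integrable (fun x => x) μ) :
    (1 - lam * moment μ 1) * s ≤ ‖phi lam μ s‖ := by
  have hsin : ∫ x, Real.sin (s * x) ∂μ ≤ s * moment μ 1 := by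
    rw [moment, ← integral_const_mul]
    refine integral_mono_ae (Integrable.of_bound (by fun_prop) 1
      (.of_forall fun x => Real.abs_sin_le_one _)) (by simpa using h1.const_mul s) ?_
    filter_upwards [hμ] with x hx
    simpa using Real.sin_le (mul_nonneg hs hx)
  have him : (phi lam μ s).im = lam * ∫ x, Real.sin (s * x) ∂μ - s := by
    simp [phi, charFn_im]
  calc (1 - lam * moment μ 1) * s ≤ -(phi lam μ s).im := by
        rw [him]; nlinarith [mul_le_mul_of_nonneg_left hsin hlam]
    _ ≤ ‖phi lam μ s‖ := (neg_le_abs _).trans (abs_im_le_norm _)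

lemma phi_sub_mul_phiDeriv [IsProbabilityMeasure μ] (lam s : ℝ)
    (h1 : Integrable (fun x => x) μ) :
    phi lam μ s - s * phiDeriv lam μ s =
      lam * ∫ x, (exp (I * s * x) - 1 - s * (I * x * exp (I * s * x))) ∂μ := by
  have he := integrable_cexp_I_mul (μ := μ) s
  have he1 : Integrable (fun x : ℝ => exp (I * s * x) - 1) μ := he.sub (integrable_const 1)
  rw [integral_sub he1 ((integrable_mul_cexp_I_mul h1 s).const_mul _),
    integral_sub he (integrable_const 1), integral_const_mul, phi, phiDeriv, charFn]
  simp only [integral_const, probReal_univ, one_smul]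
  ring

lemma norm_phi_sub_mul_phiDeriv_le [IsProbabilityMeasure μ] (lam s : ℝ)
    (h1 : Integrable (fun x => x) μ) (h2 : Integrable (fun x => x ^ 2) μ) :
    ‖phi lam μ s - s * phiDeriv lam μ s‖ ≤ |lam| * (s ^ 2 * moment μ 2 / 2) := by
  rw [phi_sub_mul_phiDeriv lam s h1, norm_mul, norm_real, Real.norm_eq_abs]
  gcongr
  calc _ ≤ ∫ x, s ^ 2 / 2 * x ^ 2 ∂μ := by
        refine norm_integral_le_of_norm_le (h2.const_mul _) (.of_forall fun x => ?_)
        have hrw : exp (I * s * x) - 1 - s * (I * x * exp (I * s * x)) =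
            exp (I * ↑(s * x)) - 1 - I * ↑(s * x) * exp (I * ↑(s * x)) := by
          push_cast; ring_nf
        rw [hrw]
        exact (norm_cexp_I_mul_sub_one_sub_mul_le (s * x)).trans_eq (by ring)
    _ = s ^ 2 * moment μ 2 / 2 := by rw [integral_const_mul, moment]; ring

theorem norm_kappa3_le [IsProbabilityMeasure μ] {lam ξ s : ℝ} (hlam : 0 ≤ lam)
    (hs : 0 < s) (hμ : ∀ᵐ x ∂μ, 0 ≤ x) (h1 : Integrable (fun x => x) μ)
    (h2 : Integrable (fun x => x ^ 2) μ) (hρ : lam * moment μ 1 < 1) :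
    ‖kappa3 lam ξ μ s‖ ≤ |ξ| * lam * moment μ 2 / (1 - lam * moment μ 1) := by
  set r := 1 - lam * moment μ 1 with hr
  have hr0 : 0 < r := by linarith
  have hm2 : 0 ≤ moment μ 2 := integral_nonneg fun x => sq_nonneg x
  have hφ : r * s ≤ ‖phi lam μ s‖ := mul_le_norm_phi hlam hs.le hμ h1
  have hφ0 : 0 < ‖phi lam μ s‖ := (mul_pos hr0 hs).trans_le hφ
  have hfactor : ‖s * phiDeriv lam μ 0 / phi lam μ s‖ ≤ 1 := by
    rw [norm_div, norm_mul, norm_phiDeriv_zero, norm_real, Real.norm_eq_abs, abs_of_pos hs,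
      ← hr, abs_of_pos hr0, div_le_one hφ0]
    linarith
  have htaylor : ‖(phi lam μ s - s * phiDeriv lam μ s) / phi lam μ s ^ 2‖ ≤
      lam * moment μ 2 / (2 * r ^ 2) := by
    rw [norm_div, norm_pow, div_le_iff₀ (by positivity)]
    calc _ ≤ lam * (s ^ 2 * moment μ 2 / 2) := by
          simpa [abs_of_nonneg hlam] using norm_phi_sub_mul_phiDeriv_le lam s h1 h2
      _ = lam * moment μ 2 / (2 * r ^ 2) * (r * s) ^ 2 := by field_simp
      _ ≤ _ := by gcongr
  have hconst : ‖(lam * moment μ 2 / (2 * r ^ 2) : ℂ)‖ = lam * moment μ 2 / (2 * r ^ 2) := by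
    simp only [norm_div, norm_mul, norm_pow, norm_real, Real.norm_eq_abs, Complex.norm_ofNat,
      abs_of_nonneg hlam, abs_of_nonneg hm2, sq_abs]
  rw [kappa3_eq lam ξ μ (norm_pos_iff.1 hφ0), ← ofReal_one, ← ofReal_mul, ← ofReal_sub, ← hr]
  calc _ ≤ |ξ| * r * 1 * (lam * moment μ 2 / (2 * r ^ 2) + lam * moment μ 2 / (2 * r ^ 2)) := by
        simp only [norm_mul, norm_real, Real.norm_eq_abs, abs_of_pos hr0]
        gcongr
        exact (norm_add_le _ _).trans (add_le_add htaylor hconst.le)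
    _ = |ξ| * lam * moment μ 2 / r := by field_simp; ring

end

/-- For fixed `λ > 0`, `ξ > 0`, `δ ∈ (0,1)` and `M ∈ (0,∞)`, there is `0 < K₃ < ∞` with
`|κ₃(s; μ)| ≤ K₃` for every `μ ∈ 𝒢(δ, M)` and every `s > 0`. -/
theorem kappa3_uniformly_bounded (lam : ℝ) (hlam : 0 < lam) (ξ : ℝ) (hξ : 0 < ξ)
    (δ : ℝ) (hδ : δ ∈ Set.Ioo (0 : ℝ) 1) (M : ℝ) (hM : 0 < M) :
    ∃ K₃ : ℝ, 0 < K₃ ∧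
      ∀ (μ : Measure ℝ), IsProbabilityMeasure μ → μ (Set.Ici 0) = 1 →
        Integrable (fun x => x) μ → Integrable (fun x => x ^ 2) μ →
        Integrable (fun x => x ^ 3) μ →
        lam * moment μ 1 ≤ 1 - δ → moment μ 3 ≤ M →
        ∀ s : ℝ, 0 < s → ‖kappa3 lam ξ μ s‖ ≤ K₃ := by
  obtain ⟨hδ0, -⟩ := hδ
  refine ⟨ξ * lam * (1 + M) / δ, by positivity, fun μ _ hsupp h1 h2 h3 hρ hm3 s hs => ?_⟩
  have hμ := ae_nonneg_of_measure_Ici_eq_one hsupp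
  have hm2 : moment μ 2 ≤ 1 + M := (moment_two_le_one_add_moment_three hμ h2 h3).trans (by linarith)
  calc ‖kappa3 lam ξ μ s‖ ≤ |ξ| * lam * moment μ 2 / (1 - lam * moment μ 1) :=
        norm_kappa3_le hlam.le hs hμ h1 h2 (by linarith)
    _ ≤ ξ * lam * (1 + M) / δ := by
        rw [abs_of_pos hξ]
        gcongr
        linarith
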